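/- arXiv:2510.11377 — 3 statements merged into one kernel-verified Lean document; each statement's English description precedes it below -/
import Mathlib

section
/- Let T ⊂ ℝ^n be a k-dimensional subspace, f : T → T^⊥ differentiable at x, S = Im(id_T + ∇f(x)) the tangent plane of the graph, and v ∈ ℝ^n. If ∂_t f(x) = T^⊥ v - ∇f(x)(T v), then S^⊥(∂_t f(x)) = S^⊥ v, where S^⊥ denotes orthogonal projection onto the orthogonal complement of S. -/
/-!
Splitting `v = T v + T^⊥ v` gives `v - ∂_t f(x) = T v + ∇f(x)(T v)`, a vector of `S`, which
`S^⊥` annihilates.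
-/

namespace Submodule

variable {𝕜 E : Type*} [RCLike 𝕜] [NormedAddCommGroup E] [InnerProductSpace 𝕜 E]

theorem orthogonalProjectionOnto_orthogonal_eq_of_sub_mem {S : Submodule 𝕜 E}
    [Sᗮ.HasOrthogonalProjection] {v w : E} (h : v - w ∈ S) :
    Sᗮ.orthogonalProjectionOnto v = Sᗮ.orthogonalProjectionOnto w :=
  sub_eq_zero.mp <| by rw [← map_sub]; exact orthogonalProjectionOnto_orthogonal_apply_eq_zero h

theorem sub_mem_range_subtype_add_subtype_comp (K : Submodule 𝕜 E) [K.HasOrthogonalProjection]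
    (D : K →ₗ[𝕜] Kᗮ) (v : E) :
    v - ((Kᗮ.orthogonalProjectionOnto v - D (K.orthogonalProjectionOnto v) : Kᗮ) : E) ∈
      LinearMap.range (K.subtype + Kᗮ.subtype ∘ₗ D) := by
  refine ⟨K.orthogonalProjectionOnto v, ?_⟩
  nth_rewrite 2 [← K.starProjection_add_starProjection_orthogonal v]
  simp only [LinearMap.add_apply, LinearMap.comp_apply, subtype_apply, AddSubgroupClass.coe_sub,
    starProjection_apply]
  abel

end Submodule

theorem stmt4_general (n : ℕ) (T : Submodule ℝ (EuclideanSpace ℝ (Fin n)))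
    (D : T →L[ℝ] Tᗮ)
    (S : Submodule ℝ (EuclideanSpace ℝ (Fin n)))
    (hS : S = LinearMap.range (T.subtype + Tᗮ.subtype ∘ₗ (D : T →ₗ[ℝ] Tᗮ)))
    (v : EuclideanSpace ℝ (Fin n)) (w : Tᗮ)
    (hw : w = Tᗮ.orthogonalProjection v - D (T.orthogonalProjection v)) :
    Sᗮ.orthogonalProjection ((w : EuclideanSpace ℝ (Fin n)))
      = Sᗮ.orthogonalProjection v := by
  subst hS hw
  exact (Submodule.orthogonalProjectionOnto_orthogonal_eq_of_sub_mem
    (Submodule.sub_mem_range_subtype_add_subtype_comp T D v)).symm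

/-- Let `T ⊂ ℝ^n` be a `k`-dimensional subspace, `f : T → T^⊥` differentiable at `x` with
derivative `D = ∇f(x)`, `S = Im(id_T + ∇f(x))` the tangent plane of the graph, and
`v ∈ ℝ^n`. If `∂_t f(x) = T^⊥ v - ∇f(x)(T v)`, then `S^⊥(∂_t f(x)) = S^⊥ v`. -/
theorem stmt4 (n k : ℕ) (T : Submodule ℝ (EuclideanSpace ℝ (Fin n)))
    (hT : Module.finrank ℝ T = k)
    (f : T → Tᗮ) (x : T) (D : T →L[ℝ] Tᗮ) (hf : HasFDerivAt f D x)
    (S : Submodule ℝ (EuclideanSpace ℝ (Fin n)))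
    (hS : S = LinearMap.range (T.subtype + Tᗮ.subtype ∘ₗ (D : T →ₗ[ℝ] Tᗮ)))
    (v : EuclideanSpace ℝ (Fin n)) (w : Tᗮ)
    (hw : w = Tᗮ.orthogonalProjection v - D (T.orthogonalProjection v)) :
    Sᗮ.orthogonalProjection ((w : EuclideanSpace ℝ (Fin n)))
      = Sᗮ.orthogonalProjection v :=
  stmt4_general n T D S hS v w hw
end

section
/- For linear maps P : ℝ^k → ℝ^{n-k}, vectors ξ ∈ ℝ^k and η ∈ ℝ^{n-k}, the second derivative of the area integrand satisfies the Legendre–Hadamard inequality: ∑_{i,j,l,a,b} ∂_{P_j^b}(√(g(P)) g^{il}(P) P_l^a) ξ_i ξ_j η^a η^b ≥ (√(g(P)) / (1 + ‖P‖_F²)²) |ξ|² |η|², where g_{ij}(P) = δ_{ij} + ∑_a P_i^a P_j^a, (g^{ij}) = (g_{ij})^{-1}, g(P) = det(g_{ij}(P)), and ‖P‖_F is the Frobenius norm. -/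
/-!
Along the line `t ↦ P + t ξ ⊗ η`, the matrix determinant lemma for the rank-two update of
`g = 1 + PPᵀ` gives `det g(t) = det g · (1 + 2βt + (β² + |η|²α - αγ)t²)`, where `α = ξ·g⁻¹ξ`,
`β = ξ·g⁻¹Pη` and `γ = Pη·g⁻¹Pη`. So the second derivative of `√(det g(t))` at `0` is
`√(det g) · α (|η|² - γ)`, and `|η|² - γ = η·(1 + PᵀP)⁻¹η` by the push-through identity.
Both `1 + PPᵀ` and `1 + PᵀP` are at most `(1 + ‖P‖_F²) I`, and for a positive definite `G ≤ C I`
Cauchy–Schwarz for the form of `G` gives `|x|⁴ ≤ (x·Gx)(x·G⁻¹x)`, hence `x·G⁻¹x ≥ |x|²/C`.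
-/

open Matrix Topology

namespace Matrix

theorem PosDef.dotProduct_div_le_dotProduct_inv_mulVec {ι : Type*} [Fintype ι] [DecidableEq ι]
    {G : Matrix ι ι ℝ} (hG : G.PosDef) {C : ℝ} (hC : 0 < C) {x : ι → ℝ}
    (hx : x ⬝ᵥ G *ᵥ x ≤ C * (x ⬝ᵥ x)) :
    x ⬝ᵥ x / C ≤ x ⬝ᵥ G⁻¹ *ᵥ x := by
  have hGG : G * G⁻¹ = 1 := mul_nonsing_inv G ((isUnit_iff_isUnit_det G).mp hG.isUnit)
  have hGt : Gᵀ = G := by simpa using hG.isHermitian.eq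
  set y := G⁻¹ *ᵥ x
  have hGy : G *ᵥ y = x := by simp [y, mulVec_mulVec, hGG]
  have hyG : y ⬝ᵥ G *ᵥ x = x ⬝ᵥ x := by
    rw [dotProduct_mulVec, ← mulVec_transpose, hGt, hGy, dotProduct_comm]
  have hcs := LinearMap.BilinForm.apply_mul_apply_le_of_forall_zero_le (toLinearMap₂' ℝ G)
    (fun z => by simpa [toLinearMap₂'_apply'] using hG.posSemidef.dotProduct_mulVec_nonneg z) x y
  simp only [toLinearMap₂'_apply', hGy, hyG, dotProduct_comm y x] at hcs
  have hy : 0 ≤ x ⬝ᵥ y := by simpa using hG.inv.posSemidef.dotProduct_mulVec_nonneg x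
  have hxx : 0 ≤ x ⬝ᵥ x := by simpa using dotProduct_star_self_nonneg x
  rw [div_le_iff₀ hC]
  rcases hxx.eq_or_lt with h0 | hpos
  · rw [← h0]; positivity
  · nlinarith

theorem posDef_one_add_mul_transpose {ι κ : Type*} [Fintype ι] [Fintype κ] [DecidableEq ι]
    (B : Matrix ι κ ℝ) : (1 + B * Bᵀ).PosDef :=
  PosDef.one.add_posSemidef (by simpa using posSemidef_self_mul_conjTranspose B)

theorem dotProduct_one_add_mul_transpose_mulVec_le {ι κ : Type*} [Fintype ι] [Fintype κ]
    [DecidableEq ι] (B : Matrix ι κ ℝ) (x : ι → ℝ) :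
    x ⬝ᵥ (1 + B * Bᵀ) *ᵥ x ≤ (1 + ∑ i, ∑ a, B i a ^ 2) * (x ⬝ᵥ x) := by
  have hcs (a : κ) : (∑ i, B i a * x i) ^ 2 ≤ (∑ i, B i a ^ 2) * (x ⬝ᵥ x) := by
    simpa [dotProduct, sq] using Finset.sum_mul_sq_le_sq_mul_sq Finset.univ (fun i => B i a) x
  have hquad : x ⬝ᵥ (B * Bᵀ) *ᵥ x = ∑ a, (∑ i, B i a * x i) ^ 2 := by
    rw [← mulVec_mulVec, dotProduct_mulVec, ← mulVec_transpose]
    simp [dotProduct, mulVec, sq]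
  calc x ⬝ᵥ (1 + B * Bᵀ) *ᵥ x = x ⬝ᵥ x + ∑ a, (∑ i, B i a * x i) ^ 2 := by
        rw [add_mulVec, dotProduct_add, one_mulVec, hquad]
    _ ≤ x ⬝ᵥ x + ∑ a, (∑ i, B i a ^ 2) * (x ⬝ᵥ x) := by gcongr with a; exact hcs a
    _ = (1 + ∑ i, ∑ a, B i a ^ 2) * (x ⬝ᵥ x) := by
        rw [← Finset.sum_mul, Finset.sum_comm]; ring

theorem dotProduct_div_le_dotProduct_inv_one_add_mul_transpose_mulVec {ι κ : Type*} [Fintype ι]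
    [Fintype κ] [DecidableEq ι] (B : Matrix ι κ ℝ) (x : ι → ℝ) :
    x ⬝ᵥ x / (1 + ∑ i, ∑ a, B i a ^ 2) ≤ x ⬝ᵥ (1 + B * Bᵀ)⁻¹ *ᵥ x :=
  (posDef_one_add_mul_transpose B).dotProduct_div_le_dotProduct_inv_mulVec (by positivity)
    (dotProduct_one_add_mul_transpose_mulVec_le B x)

theorem inv_one_add_transpose_mul {ι κ : Type*} [Fintype ι] [Fintype κ] [DecidableEq ι]
    [DecidableEq κ] (B : Matrix ι κ ℝ) :
    (1 + Bᵀ * B)⁻¹ = 1 - Bᵀ * (1 + B * Bᵀ)⁻¹ * B := by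
  have hG : (1 + B * Bᵀ) * (1 + B * Bᵀ)⁻¹ = 1 :=
    mul_nonsing_inv _ (posDef_one_add_mul_transpose B).det_pos.ne'.isUnit
  refine inv_eq_right_inv ?_
  calc (1 + Bᵀ * B) * (1 - Bᵀ * (1 + B * Bᵀ)⁻¹ * B)
      = 1 + Bᵀ * B - Bᵀ * ((1 + B * Bᵀ) * (1 + B * Bᵀ)⁻¹) * B := by
        simp only [Matrix.mul_sub, Matrix.add_mul, Matrix.mul_add, Matrix.one_mul, Matrix.mul_one,
          Matrix.mul_assoc]
    _ = 1 := by rw [hG, Matrix.mul_one, add_sub_cancel_right]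

theorem dotProduct_div_le_dotProduct_inv_one_add_transpose_mul_mulVec {ι κ : Type*} [Fintype ι]
    [Fintype κ] [DecidableEq κ] (B : Matrix ι κ ℝ) (y : κ → ℝ) :
    y ⬝ᵥ y / (1 + ∑ i, ∑ a, B i a ^ 2) ≤ y ⬝ᵥ (1 + Bᵀ * B)⁻¹ *ᵥ y := by
  simpa [Finset.sum_comm (γ := ι)] using
    dotProduct_div_le_dotProduct_inv_one_add_mul_transpose_mulVec Bᵀ y

theorem of_fin_two_mul_mul_transpose {R ι : Type*} [CommRing R] [Fintype ι]
    (W : Matrix ι ι R) (v w : ι → R) :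
    of ![v, w] * W * (of ![v, w])ᵀ =
      !![v ⬝ᵥ W *ᵥ v, v ⬝ᵥ W *ᵥ w; w ⬝ᵥ W *ᵥ v, w ⬝ᵥ W *ᵥ w] := by
  ext i j
  fin_cases i <;> fin_cases j <;> simp [mul_apply] <;> exact (dotProduct_mulVec _ _ _).symm

theorem add_smul_vecMulVec_mul_transpose {R ι κ : Type*} [CommRing R] [Fintype κ]
    (B : Matrix ι κ R) (ξ : ι → R) (η : κ → R) (t : R) :
    (B + t • vecMulVec ξ η) * (B + t • vecMulVec ξ η)ᵀ
      = B * Bᵀ + (of ![ξ, B *ᵥ η])ᵀ * (!![t ^ 2 * (η ⬝ᵥ η), t; t, 0] * of ![ξ, B *ᵥ η]) := by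
  simp only [Matrix.add_mul, Matrix.mul_add, transpose_add, transpose_smul, transpose_vecMulVec,
    Matrix.smul_mul, Matrix.mul_smul, mul_vecMulVec, vecMulVec_mul, vecMul_transpose, add_mulVec,
    smul_mulVec, vecMulVec_mulVec]
  ext i j
  simp [mul_apply, Fin.sum_univ_two, vecMulVec_apply]
  ring

theorem det_one_add_add_smul_vecMulVec_mul_transpose {R ι κ : Type*} [CommRing R] [Fintype ι]
    [Fintype κ] [DecidableEq ι] (B : Matrix ι κ R) (hB : IsUnit (1 + B * Bᵀ).det)
    (ξ : ι → R) (η : κ → R) (t : R) :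
    let W := (1 + B * Bᵀ)⁻¹
    (1 + (B + t • vecMulVec ξ η) * (B + t • vecMulVec ξ η)ᵀ).det =
      (1 + B * Bᵀ).det * (1 + 2 * (ξ ⬝ᵥ W *ᵥ (B *ᵥ η)) * t + ((ξ ⬝ᵥ W *ᵥ (B *ᵥ η)) ^ 2
        + (η ⬝ᵥ η) * (ξ ⬝ᵥ W *ᵥ ξ) - (ξ ⬝ᵥ W *ᵥ ξ) * ((B *ᵥ η) ⬝ᵥ W *ᵥ (B *ᵥ η))) * t ^ 2) := by
  intro W
  have hWt : Wᵀ = W := by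
    rw [transpose_nonsing_inv, transpose_add, transpose_one, transpose_mul, transpose_transpose]
  have hsymm : (B *ᵥ η) ⬝ᵥ W *ᵥ ξ = ξ ⬝ᵥ W *ᵥ (B *ᵥ η) := by
    rw [dotProduct_mulVec, ← hWt, vecMul_transpose, hWt, dotProduct_comm]
  rw [add_smul_vecMulVec_mul_transpose, ← add_assoc, det_add_mul _ _ hB, Matrix.mul_assoc,
    Matrix.mul_assoc, ← Matrix.mul_assoc (of _) W, of_fin_two_mul_mul_transpose, hsymm,
    det_fin_two]
  simp
  ring

end Matrix

theorem contDiff_det_one_add_of_mul_transpose {ι κ : Type*} [Fintype ι] [Fintype κ]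
    [DecidableEq ι] {n : WithTop ℕ∞} :
    ContDiff ℝ n (fun Q : ι → κ → ℝ => (1 + of Q * (of Q)ᵀ).det) := by
  simp only [det_apply', Matrix.add_apply, mul_apply, transpose_apply, of_apply]
  fun_prop

theorem iteratedFDeriv_two_apply_eq_iteratedDeriv_line {E F : Type*} [NormedAddCommGroup E]
    [NormedSpace ℝ E] [NormedAddCommGroup F] [NormedSpace ℝ F] {f : E → F} (hf : ContDiff ℝ 2 f)
    (x v : E) :
    iteratedFDeriv ℝ 2 f x ![v, v] = iteratedDeriv 2 (fun t : ℝ => f (x + t • v)) 0 := by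
  have hline : (fun t : ℝ => f (x + t • v)) =
      (fun y => f (x + y)) ∘ ContinuousLinearMap.smulRight (1 : ℝ →L[ℝ] ℝ) v := by
    ext t; simp
  have hfx : ContDiff ℝ 2 (fun y => f (x + y)) := hf.comp (contDiff_const.add contDiff_id)
  rw [iteratedDeriv_eq_iteratedFDeriv, hline,
    ContinuousLinearMap.iteratedFDeriv_comp_right _ hfx _ le_rfl, iteratedFDeriv_comp_add_left]
  simp only [ContinuousMultilinearMap.compContinuousLinearMap_apply, map_zero, add_zero]
  congr 1
  ext i
  fin_cases i <;> simp

theorem iteratedDeriv_two_sqrt_one_add_quadratic (b d : ℝ) :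
    iteratedDeriv 2 (fun t : ℝ => √(1 + 2 * b * t + d * t ^ 2)) 0 = d - b ^ 2 := by
  set q : ℝ → ℝ := fun t => 1 + 2 * b * t + d * t ^ 2
  have hq (t : ℝ) : HasDerivAt q (2 * (b + d * t)) t := by
    have := (((hasDerivAt_id' t).const_mul (2 * b)).const_add 1).add
      ((hasDerivAt_pow 2 t).const_mul d)
    exact this.congr_deriv (by push_cast; ring)
  have hq0 : q 0 = 1 := by simp [q]
  have hderiv : deriv (fun t => √(q t)) =ᶠ[𝓝 0] fun t => (b + d * t) / √(q t) := by
    have hq0_pos : (0 : ℝ) < q 0 := by simp [hq0]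
    filter_upwards [continuousAt_const.eventually_lt (hq 0).continuousAt hq0_pos] with t ht
    rw [((hq t).sqrt ht.ne').deriv]
    field_simp
  have hnum : HasDerivAt (fun t => b + d * t) d 0 :=
    ((hasDerivAt_id' 0).const_mul d).const_add b |>.congr_deriv (mul_one d)
  have hquot : HasDerivAt (fun t => (b + d * t) / √(q t)) _ 0 :=
    hnum.div ((hq 0).sqrt (by simp [hq0])) (by simp [hq0])
  rw [iteratedDeriv_succ, iteratedDeriv_one, hderiv.deriv_eq, hquot.deriv, hq0]
  simp
  ring

theorem iteratedFDeriv_two_sqrt_det_one_add_of_mul_transpose_rankOne {ι κ : Type*} [Fintype ι]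
    [Fintype κ] [DecidableEq ι] [DecidableEq κ] (P : ι → κ → ℝ) (ξ : ι → ℝ) (η : κ → ℝ) :
    iteratedFDeriv ℝ 2 (fun Q : ι → κ → ℝ => √((1 + of Q * (of Q)ᵀ).det)) P
        ![fun i a => ξ i * η a, fun i a => ξ i * η a] =
      √((1 + of P * (of P)ᵀ).det) *
        ((ξ ⬝ᵥ (1 + of P * (of P)ᵀ)⁻¹ *ᵥ ξ) * (η ⬝ᵥ (1 + (of P)ᵀ * of P)⁻¹ *ᵥ η)) := by
  set B := of P
  set W := (1 + B * Bᵀ)⁻¹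
  set g := (1 + B * Bᵀ).det
  set α := ξ ⬝ᵥ W *ᵥ ξ
  set β := ξ ⬝ᵥ W *ᵥ (B *ᵥ η)
  have hδ : η ⬝ᵥ (1 + Bᵀ * B)⁻¹ *ᵥ η = η ⬝ᵥ η - (B *ᵥ η) ⬝ᵥ W *ᵥ (B *ᵥ η) := by
    simp [inv_one_add_transpose_mul, sub_mulVec, ← mulVec_mulVec, dotProduct_mulVec _ Bᵀ,
      vecMul_transpose, W]
  rw [hδ]
  set δ := η ⬝ᵥ η - (B *ᵥ η) ⬝ᵥ W *ᵥ (B *ᵥ η)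
  have hg : 0 < g := (posDef_one_add_mul_transpose B).det_pos
  have hline (t : ℝ) : √((1 + of (P + t • fun i a => ξ i * η a)
      * (of (P + t • fun i a => ξ i * η a))ᵀ).det)
        = √g * √(1 + 2 * β * t + (β ^ 2 + α * δ) * t ^ 2) := by
    rw [← Real.sqrt_mul hg.le]
    congr 1
    change (1 + (B + t • vecMulVec ξ η) * (B + t • vecMulVec ξ η)ᵀ).det = _
    rw [det_one_add_add_smul_vecMulVec_mul_transpose B hg.ne'.isUnit ξ η t]
    ring
  have hF : ContDiff ℝ 2 fun Q : ι → κ → ℝ => √((1 + of Q * (of Q)ᵀ).det) :=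
    contDiff_det_one_add_of_mul_transpose.sqrt fun Q => (posDef_one_add_mul_transpose _).det_pos.ne'
  rw [iteratedFDeriv_two_apply_eq_iteratedDeriv_line hF, funext hline,
    iteratedDeriv_const_mul_field, iteratedDeriv_two_sqrt_one_add_quadratic]
  ring

/-- Legendre–Hadamard inequality (rank-one convexity with explicit modulus) for the area
integrand `F(P) = √(det(I + PPᵀ))`: for every `P`, `ξ`, `η`, the second derivative of `F`
at `P` in the rank-one direction `ξ ⊗ η` is bounded below by
`√(g(P)) / (1 + ‖P‖_F²)² · |ξ|² |η|²`. -/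
theorem stmt15 (k m : ℕ) (P : Fin k → Fin m → ℝ) (ξ : Fin k → ℝ) (η : Fin m → ℝ) :
    Real.sqrt ((1 + Matrix.of P * (Matrix.of P)ᵀ).det)
        / (1 + ∑ i, ∑ a, (P i a) ^ 2) ^ 2 * ((∑ i, (ξ i) ^ 2) * (∑ a, (η a) ^ 2))
      ≤ iteratedFDeriv ℝ 2
          (fun Q : Fin k → Fin m → ℝ => Real.sqrt ((1 + Matrix.of Q * (Matrix.of Q)ᵀ).det))
          P ![fun i a => ξ i * η a, fun i a => ξ i * η a] := by
  rw [iteratedFDeriv_two_sqrt_det_one_add_of_mul_transpose_rankOne]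
  set s := ∑ i, ∑ a, P i a ^ 2
  have hα : ξ ⬝ᵥ ξ / (1 + s) ≤ ξ ⬝ᵥ (1 + of P * (of P)ᵀ)⁻¹ *ᵥ ξ :=
    dotProduct_div_le_dotProduct_inv_one_add_mul_transpose_mulVec (of P) ξ
  have hδ : η ⬝ᵥ η / (1 + s) ≤ η ⬝ᵥ (1 + (of P)ᵀ * of P)⁻¹ *ᵥ η :=
    dotProduct_div_le_dotProduct_inv_one_add_transpose_mul_mulVec (of P) η
  have hsq {ι : Type} [Fintype ι] (x : ι → ℝ) : ∑ i, x i ^ 2 = x ⬝ᵥ x := by simp [dotProduct, sq]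
  have hnonneg {ι : Type} [Fintype ι] (x : ι → ℝ) : 0 ≤ x ⬝ᵥ x / (1 + s) :=
    div_nonneg (by simpa using dotProduct_star_self_nonneg x) (by positivity)
  calc √((1 + of P * (of P)ᵀ).det) / (1 + s) ^ 2 * ((∑ i, ξ i ^ 2) * (∑ a, η a ^ 2))
      = √((1 + of P * (of P)ᵀ).det) * (ξ ⬝ᵥ ξ / (1 + s) * (η ⬝ᵥ η / (1 + s))) := by
        rw [hsq, hsq, div_mul_div_comm, ← sq]; ring
    _ ≤ _ := by
        gcongr ?_ * ?_
        exact mul_le_mul hα hδ (hnonneg η) ((hnonneg ξ).trans hα)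
end

section
/- Let Ω ⊆ ℝ^k be open and bounded, and suppose f : Ω → ℝ^{n-k} is C¹ with ‖∇f‖_∞ = L and that the varifold V = |graph f| has locally bounded first variation with generalized mean curvature h ∈ L²(‖V‖). Then f is a weak solution of the system ∑_{i,j} ∂_i(√g g^{ij} ∂_j f^a) = √g h^a(· + f(·)) for a = k+1,…,n, i.e., for every φ ∈ C_c^1(Ω): ∫_Ω √g g^{ij} ∂_j f^a ∂_i φ dx = -∫_Ω √g h^a(x + f(x)) φ(x) dx, where g_{ij} = δ_{ij} + ∂_i f·∂_j f, (g^{ij}) = (g_{ij})^{-1}, g = det(g_{ij}). -/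
/-!
Test the first variation identity with the vertical field `X(x, y) = φ(x) χ(y) e_b`, where the
cutoff `χ` equals `1` near `f(spt φ)`, so that `X = φ(x) e_b` near the graph. Along the graph
`DX = e_b ⊗ (Dφ ∘ π₁)`, hence `div_V X = Dφ(π₁(P e_b))` with `P` the orthogonal projection onto
the tangent plane `{(u, Df u)}`. The normal equations `(I + Dfᵀ Df) u = Dfᵀ e_b` give
`π₁(P e_b) = g⁻¹ ∇f^b`, so `div_V X = gⁱʲ ∂_j f^b ∂_i φ`, while `X · h = φ h^b` on the graph.
-/

open MeasureTheory Filter Topology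
open scoped RealInnerProductSpace Matrix

theorem ContinuousLinearMap.trace_comp_smulRight {𝕜 M : Type*} [NontriviallyNormedField 𝕜]
    [NormedAddCommGroup M] [NormedSpace 𝕜 M] [FiniteDimensional 𝕜 M]
    (P : M →L[𝕜] M) (l : M →L[𝕜] 𝕜) (v : M) :
    LinearMap.trace 𝕜 M (P ∘L l.smulRight v : M →L[𝕜] M) = l (P v) := by
  rw [show P ∘L l.smulRight v = l.smulRight (P v) by ext; simp]
  exact LinearMap.trace_smulRight (l : M →ₗ[𝕜] 𝕜) (P v)

section GraphProjection

variable {E F : Type*} [NormedAddCommGroup E] [InnerProductSpace ℝ E]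
  [NormedAddCommGroup F] [InnerProductSpace ℝ F]

def graphSubspace (D : E →ₗ[ℝ] F) : Submodule ℝ (WithLp 2 (E × F)) :=
  LinearMap.range ((WithLp.linearEquiv 2 ℝ (E × F)).symm.toLinearMap ∘ₗ
    LinearMap.prod LinearMap.id D)

theorem starProjection_graphSubspace_toLp (D : E →ₗ[ℝ] F)
    [(graphSubspace D).HasOrthogonalProjection] {a u : E} {w : F}
    (hu : ∀ y, ⟪u, y⟫ + ⟪D u, D y⟫ = ⟪a, y⟫ + ⟪w, D y⟫) :
    (graphSubspace D).starProjection (WithLp.toLp 2 (a, w)) = WithLp.toLp 2 (u, D u) := by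
  refine Submodule.eq_starProjection_of_mem_of_inner_eq_zero ⟨u, rfl⟩ ?_
  rintro _ ⟨y, rfl⟩
  simp [inner_sub_left, hu y]

end GraphProjection

section Coordinates

variable {ι κ : Type*} [DecidableEq ι] [Fintype κ]

/-- For `D = Df(x)` this is the induced metric `g_ij = δ_ij + ∂_i f · ∂_j f` of the graph. -/
noncomputable def graphMetric (D : EuclideanSpace ℝ ι →L[ℝ] EuclideanSpace ℝ κ) : Matrix ι ι ℝ :=
  Matrix.of fun i j => (if i = j then (1 : ℝ) else 0)
    + ∑ a, D (EuclideanSpace.single i 1) a * D (EuclideanSpace.single j 1) a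

theorem graphMetric_eq_one_add_gram (D : EuclideanSpace ℝ ι →L[ℝ] EuclideanSpace ℝ κ) :
    graphMetric D = 1 + Matrix.gram ℝ fun i => D (EuclideanSpace.single i 1) := by
  ext i j
  simp [graphMetric, Matrix.one_apply, Matrix.gram, PiLp.inner_apply, mul_comm]

variable [Fintype ι]

theorem graphMetric_posDef (D : EuclideanSpace ℝ ι →L[ℝ] EuclideanSpace ℝ κ) :
    (graphMetric D).PosDef := by
  rw [graphMetric_eq_one_add_gram]
  exact Matrix.PosDef.one.add_posSemidef (Matrix.posSemidef_gram ℝ _)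

theorem continuous_graphMetric :
    Continuous (graphMetric : (EuclideanSpace ℝ ι →L[ℝ] EuclideanSpace ℝ κ) → Matrix ι ι ℝ) := by
  refine continuous_matrix fun i j => ?_
  simp only [graphMetric, Matrix.of_apply]
  fun_prop

theorem EuclideanSpace.apply_eq_sum_single {M 𝓛 : Type*} [AddCommGroup M] [Module ℝ M]
    [FunLike 𝓛 (EuclideanSpace ℝ ι) M] [LinearMapClass 𝓛 ℝ (EuclideanSpace ℝ ι) M]
    (L : 𝓛) (u : EuclideanSpace ℝ ι) :
    L u = ∑ i, u i • L (EuclideanSpace.single i 1) := by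
  conv_lhs => rw [← (EuclideanSpace.basisFun ι ℝ).sum_repr u]
  simp

theorem inner_add_inner_eq_of_graphMetric_mulVec (D : EuclideanSpace ℝ ι →L[ℝ] EuclideanSpace ℝ κ)
    (w : EuclideanSpace ℝ κ) {u : EuclideanSpace ℝ ι}
    (hu : graphMetric D *ᵥ WithLp.ofLp u = fun j => ⟪w, D (EuclideanSpace.single j 1)⟫)
    (y : EuclideanSpace ℝ ι) :
    ⟪u, y⟫ + ⟪D u, D y⟫ = ⟪w, D y⟫ := by
  rw [graphMetric_eq_one_add_gram, Matrix.add_mulVec, Matrix.one_mulVec] at hu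
  suffices hlin : (innerₛₗ ℝ u + (innerₛₗ ℝ (D u)) ∘ₗ (D : EuclideanSpace ℝ ι →ₗ[ℝ] _)) =
      (innerₛₗ ℝ w) ∘ₗ (D : EuclideanSpace ℝ ι →ₗ[ℝ] _) from LinearMap.congr_fun hlin y
  refine (EuclideanSpace.basisFun ι ℝ).toBasis.ext fun i => ?_
  have hi := congrFun hu i
  simp only [Pi.add_apply, Matrix.mulVec, dotProduct, Matrix.gram_apply] at hi
  simp [← hi, EuclideanSpace.apply_eq_sum_single D u, EuclideanSpace.inner_single_right, mul_comm,
    real_inner_comm (D (EuclideanSpace.single i 1))]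

theorem fst_starProjection_graphSubspace_toLp_zero
    (D : EuclideanSpace ℝ ι →L[ℝ] EuclideanSpace ℝ κ) (w : EuclideanSpace ℝ κ) :
    ((graphSubspace (D : EuclideanSpace ℝ ι →ₗ[ℝ] EuclideanSpace ℝ κ)).starProjection
        (WithLp.toLp 2 (0, w))).fst =
      WithLp.toLp 2 ((graphMetric D)⁻¹ *ᵥ fun j => ⟪w, D (EuclideanSpace.single j 1)⟫) := by
  have hdet : IsUnit (graphMetric D).det := (graphMetric_posDef D).det_pos.ne'.isUnit
  have hu := inner_add_inner_eq_of_graphMetric_mulVec D w 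
      (u := WithLp.toLp 2 ((graphMetric D)⁻¹ *ᵥ fun j => ⟪w, D (EuclideanSpace.single j 1)⟫)) <| by
    rw [WithLp.ofLp_toLp, Matrix.mulVec_mulVec, Matrix.mul_nonsing_inv _ hdet, Matrix.one_mulVec]
  rw [starProjection_graphSubspace_toLp _ fun y => by simpa using hu y]
  rfl

theorem continuous_inv_graphMetric :
    Continuous fun D : EuclideanSpace ℝ ι →L[ℝ] EuclideanSpace ℝ κ => (graphMetric D)⁻¹ := by
  refine continuous_iff_continuousAt.2 fun D => ?_
  refine (continuousAt_matrix_inv _ ?_).comp continuous_graphMetric.continuousAt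
  rw [Ring.inverse_eq_inv']
  exact continuousAt_inv₀ (graphMetric_posDef D).det_pos.ne'

theorem apply_fst_starProjection_graphSubspace_toLp_single [DecidableEq κ]
    (D : EuclideanSpace ℝ ι →L[ℝ] EuclideanSpace ℝ κ) (l : EuclideanSpace ℝ ι →L[ℝ] ℝ) (b : κ) :
    l ((graphSubspace (D : EuclideanSpace ℝ ι →ₗ[ℝ] EuclideanSpace ℝ κ)).starProjection
        (WithLp.toLp 2 (0, EuclideanSpace.single b 1))).fst =
      ∑ i, ∑ j, (graphMetric D)⁻¹ i j * D (EuclideanSpace.single j 1) b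
        * l (EuclideanSpace.single i 1) := by
  rw [fst_starProjection_graphSubspace_toLp_zero, EuclideanSpace.apply_eq_sum_single l]
  simp only [Matrix.mulVec, dotProduct, EuclideanSpace.inner_single_left, map_one, one_mul,
    smul_eq_mul, Finset.sum_mul]

end Coordinates

section VerticalField

variable {E F : Type*} [NormedAddCommGroup E] [NormedSpace ℝ E]
  [NormedAddCommGroup F] [NormedSpace ℝ F]

def verticalField (φ : E → ℝ) (χ : F → ℝ) (w : F) (z : WithLp 2 (E × F)) : WithLp 2 (E × F) :=
  (φ z.fst * χ z.snd) • WithLp.toLp 2 (0, w)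

variable {φ : E → ℝ} {χ : F → ℝ} (w : F)

theorem contDiff_verticalField {n : WithTop ℕ∞} (hφ : ContDiff ℝ n φ) (hχ : ContDiff ℝ n χ) :
    ContDiff ℝ n (verticalField φ χ w) :=
  ((hφ.comp (WithLp.fstL 2 ℝ E F).contDiff).mul
    (hχ.comp (WithLp.sndL 2 ℝ E F).contDiff)).smul contDiff_const

theorem support_verticalField_subset :
    Function.support (verticalField φ χ w) ⊆ WithLp.toLp 2 '' (tsupport φ ×ˢ tsupport χ) := by
  intro z hz
  have hne : φ z.fst * χ z.snd ≠ 0 := fun h0 => hz (by simp [verticalField, h0])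
  exact ⟨WithLp.ofLp z, ⟨subset_tsupport φ (left_ne_zero_of_mul hne),
    subset_tsupport χ (right_ne_zero_of_mul hne)⟩, rfl⟩

theorem tsupport_verticalField_subset :
    tsupport (verticalField φ χ w) ⊆ WithLp.fst ⁻¹' tsupport φ :=
  closure_minimal (fun _ hz => (support_verticalField_subset w hz).elim
      fun _ ⟨hp, hpz⟩ => hpz ▸ hp.1)
    ((isClosed_tsupport φ).preimage (WithLp.fstL 2 ℝ E F).continuous)

theorem hasCompactSupport_verticalField (hφ : HasCompactSupport φ) (hχ : HasCompactSupport χ) :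
    HasCompactSupport (verticalField φ χ w) :=
  HasCompactSupport.intro ((hφ.prod hχ).image (WithLp.prod_continuous_toLp 2 E F))
    fun _ hz => Function.notMem_support.1 fun h => hz (support_verticalField_subset w h)

theorem verticalField_eventuallyEq {x : E} {y : F} (hxy : x ∈ tsupport φ → χ =ᶠ[𝓝 y] 1) :
    verticalField φ χ w =ᶠ[𝓝 (WithLp.toLp 2 (x, y))]
      fun z => φ z.fst • WithLp.toLp 2 (0, w) := by
  by_cases hx : x ∈ tsupport φ
  · have hχ : ∀ᶠ z in 𝓝 (WithLp.toLp 2 (x, y)), χ z.snd = 1 :=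
      ((WithLp.sndL 2 ℝ E F).continuous.tendsto (WithLp.toLp 2 (x, y))).eventually (hxy hx)
    filter_upwards [hχ] with z hz
    simp [verticalField, hz]
  · have hφ : ∀ᶠ z in 𝓝 (WithLp.toLp 2 (x, y)), z.fst ∉ tsupport φ :=
      (WithLp.fstL 2 ℝ E F).continuous.continuousAt.eventually_mem
        ((isClosed_tsupport φ).isOpen_compl.mem_nhds hx)
    filter_upwards [hφ] with z hz
    simp [verticalField, image_eq_zero_of_notMem_tsupport hz]

theorem verticalField_toLp {x : E} {y : F} (hxy : x ∈ tsupport φ → χ =ᶠ[𝓝 y] 1) :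
    verticalField φ χ w (WithLp.toLp 2 (x, y)) = φ x • WithLp.toLp 2 (0, w) :=
  (verticalField_eventuallyEq w hxy).eq_of_nhds

theorem fderiv_verticalField_toLp {x : E} {y : F} (hφ : DifferentiableAt ℝ φ x)
    (hxy : x ∈ tsupport φ → χ =ᶠ[𝓝 y] 1) :
    fderiv ℝ (verticalField φ χ w) (WithLp.toLp 2 (x, y)) =
      (fderiv ℝ φ x ∘L WithLp.fstL 2 ℝ E F).smulRight (WithLp.toLp 2 (0, w)) := by
  rw [(verticalField_eventuallyEq w hxy).fderiv_eq]
  exact ((hφ.hasFDerivAt.comp _ (WithLp.fstL 2 ℝ E F).hasFDerivAt).smul_const _).fderiv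

theorem trace_comp_fderiv_verticalField_toLp [FiniteDimensional ℝ E] [FiniteDimensional ℝ F]
    (P : WithLp 2 (E × F) →L[ℝ] WithLp 2 (E × F)) {x : E} {y : F}
    (hφ : DifferentiableAt ℝ φ x) (hxy : x ∈ tsupport φ → χ =ᶠ[𝓝 y] 1) :
    LinearMap.trace ℝ (WithLp 2 (E × F))
        (P ∘L fderiv ℝ (verticalField φ χ w) (WithLp.toLp 2 (x, y)) :
          WithLp 2 (E × F) →ₗ[ℝ] WithLp 2 (E × F)) =
      fderiv ℝ φ x (P (WithLp.toLp 2 (0, w))).fst := by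
  rw [fderiv_verticalField_toLp w hφ hxy, ContinuousLinearMap.trace_comp_smulRight]
  rfl

end VerticalField

theorem IsCompact.exists_contDiff_hasCompactSupport_eventuallyEq_one {F : Type*}
    [NormedAddCommGroup F] [NormedSpace ℝ F] [FiniteDimensional ℝ F] {K : Set F}
    (hK : IsCompact K) (n : ℕ∞) :
    ∃ χ : F → ℝ, ContDiff ℝ n χ ∧ HasCompactSupport χ ∧ ∀ y ∈ K, χ =ᶠ[𝓝 y] 1 := by
  obtain ⟨R, hR, hKR⟩ := hK.isBounded.subset_ball_lt 0 0
  let χ : ContDiffBump (0 : F) := ⟨R, 2 * R, hR, by linarith⟩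
  exact ⟨χ, χ.contDiff, χ.hasCompactSupport, fun y hy => χ.eventuallyEq_one_of_mem_ball (hKR hy)⟩

theorem stmt18_general (k m : ℕ) (L : ℝ)
    (Ω : Set (EuclideanSpace ℝ (Fin k)))
    (f : EuclideanSpace ℝ (Fin k) → EuclideanSpace ℝ (Fin m))
    (hf : ContDiff ℝ 1 f)
    (ι : EuclideanSpace ℝ (Fin k) →
      WithLp 2 (EuclideanSpace ℝ (Fin k) × EuclideanSpace ℝ (Fin m)))
    (hι : ∀ x, ι x = (WithLp.equiv 2
      (EuclideanSpace ℝ (Fin k) × EuclideanSpace ℝ (Fin m))).symm (x, f x))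
    (sg : EuclideanSpace ℝ (Fin k) → ℝ)
    (hsg : ∀ x, sg x = Real.sqrt (Matrix.det (Matrix.of fun i j =>
      (if i = j then (1 : ℝ) else 0)
        + ∑ a, fderiv ℝ f x (EuclideanSpace.single i 1) a
            * fderiv ℝ f x (EuclideanSpace.single j 1) a)))
    (ginv : EuclideanSpace ℝ (Fin k) → Matrix (Fin k) (Fin k) ℝ)
    (hginv : ∀ x, ginv x = (Matrix.of fun i j =>
      (if i = j then (1 : ℝ) else 0)
        + ∑ a, fderiv ℝ f x (EuclideanSpace.single i 1) a
            * fderiv ℝ f x (EuclideanSpace.single j 1) a)⁻¹)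
    -- the orthogonal projection onto the tangent plane of the graph at `ι x`
    (tproj : EuclideanSpace ℝ (Fin k) →
      (WithLp 2 (EuclideanSpace ℝ (Fin k) × EuclideanSpace ℝ (Fin m)) →L[ℝ]
        WithLp 2 (EuclideanSpace ℝ (Fin k) × EuclideanSpace ℝ (Fin m))))
    (htproj : ∀ x, tproj x =
      (LinearMap.range ((WithLp.linearEquiv 2 ℝ
          (EuclideanSpace ℝ (Fin k) × EuclideanSpace ℝ (Fin m))).symm.toLinearMap ∘ₗ
        LinearMap.prod LinearMap.id
          ((fderiv ℝ f x : EuclideanSpace ℝ (Fin k) →L[ℝ] EuclideanSpace ℝ (Fin m))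
            : EuclideanSpace ℝ (Fin k) →ₗ[ℝ] EuclideanSpace ℝ (Fin m)))).subtypeL
      ∘L Submodule.orthogonalProjectionOnto (LinearMap.range ((WithLp.linearEquiv 2 ℝ
          (EuclideanSpace ℝ (Fin k) × EuclideanSpace ℝ (Fin m))).symm.toLinearMap ∘ₗ
        LinearMap.prod LinearMap.id
          ((fderiv ℝ f x : EuclideanSpace ℝ (Fin k) →L[ℝ] EuclideanSpace ℝ (Fin m))
            : EuclideanSpace ℝ (Fin k) →ₗ[ℝ] EuclideanSpace ℝ (Fin m)))))
    -- the generalized mean curvature, square integrable with respect to `‖V‖`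
    (h : WithLp 2 (EuclideanSpace ℝ (Fin k) × EuclideanSpace ℝ (Fin m)) →
      WithLp 2 (EuclideanSpace ℝ (Fin k) × EuclideanSpace ℝ (Fin m)))
    -- the first variation identity `δV(X) = -∫ X·h d‖V‖`, in graph coordinates
    (hfv : ∀ X : WithLp 2 (EuclideanSpace ℝ (Fin k) × EuclideanSpace ℝ (Fin m)) →
        WithLp 2 (EuclideanSpace ℝ (Fin k) × EuclideanSpace ℝ (Fin m)),
      ContDiff ℝ 1 X → HasCompactSupport X →
      tsupport X ⊆ {z | (WithLp.equiv 2
        (EuclideanSpace ℝ (Fin k) × EuclideanSpace ℝ (Fin m)) z).1 ∈ Ω} →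
      ∫ x in Ω, (LinearMap.trace ℝ _)
          (((tproj x) ∘L (fderiv ℝ X (ι x)))
            : WithLp 2 (EuclideanSpace ℝ (Fin k) × EuclideanSpace ℝ (Fin m)) →ₗ[ℝ]
              WithLp 2 (EuclideanSpace ℝ (Fin k) × EuclideanSpace ℝ (Fin m))) * sg x
        = -∫ x in Ω, ⟪X (ι x), h (ι x)⟫ * sg x) :
    -- conclusion: weak form of the prescribed mean curvature system
    ∀ φ : EuclideanSpace ℝ (Fin k) → ℝ, ContDiff ℝ 1 φ → HasCompactSupport φ →
      tsupport φ ⊆ Ω → ∀ b : Fin m,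
      ∑ i, ∑ j, ∫ x in Ω, sg x * ginv x i j
          * fderiv ℝ f x (EuclideanSpace.single j 1) b
          * fderiv ℝ φ x (EuclideanSpace.single i 1)
        = -∫ x in Ω, sg x * ((WithLp.equiv 2
            (EuclideanSpace ℝ (Fin k) × EuclideanSpace ℝ (Fin m)) (h (ι x))).2 b)
          * φ x := by
  intro φ hφ hφc hφΩ b
  obtain ⟨χ, hχ, hχc, hχ1⟩ :=
    (hφc.isCompact.image hf.continuous).exists_contDiff_hasCompactSupport_eventuallyEq_one 1
  have hgraph : ∀ x, x ∈ tsupport φ → χ =ᶠ[𝓝 (f x)] 1 := fun x hx => hχ1 _ ⟨x, hx, rfl⟩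
  have hι' : ∀ x, ι x = WithLp.toLp 2 (x, f x) := hι
  have hint : ∀ i j, IntegrableOn (fun x => sg x * ginv x i j
      * fderiv ℝ f x (EuclideanSpace.single j 1) b
      * fderiv ℝ φ x (EuclideanSpace.single i 1)) Ω := by
    have hDf := hf.continuous_fderiv one_ne_zero
    have hsgc : Continuous sg := funext hsg ▸ (continuous_graphMetric.comp hDf).matrix_det.sqrt
    have hginvc : Continuous ginv := funext hginv ▸ continuous_inv_graphMetric.comp hDf
    exact fun i j => (Continuous.integrable_of_hasCompactSupport (by fun_prop)
      (hφc.fderiv_apply (𝕜 := ℝ) _).mul_left).integrableOn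
  calc _ = ∫ x in Ω, ∑ i, ∑ j, sg x * ginv x i j
          * fderiv ℝ f x (EuclideanSpace.single j 1) b
          * fderiv ℝ φ x (EuclideanSpace.single i 1) := by
        rw [integral_finsetSum _ fun i _ => integrable_finsetSum _ fun j _ => hint i j]
        exact Finset.sum_congr rfl fun i _ => (integral_finsetSum _ fun j _ => hint i j).symm
    _ = _ := integral_congr_ae <| ae_of_all _ fun x => ?lhs
    _ = _ := hfv (verticalField φ χ (EuclideanSpace.single b 1)) (contDiff_verticalField _ hφ hχ)
      (hasCompactSupport_verticalField _ hφc hχc)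
      ((tsupport_verticalField_subset _).trans fun _ hz => hφΩ hz)
    _ = _ := congrArg Neg.neg <| integral_congr_ae <| ae_of_all _ fun x => ?rhs
  case lhs =>
    have hP : tproj x = (graphSubspace (fderiv ℝ f x : EuclideanSpace ℝ (Fin k) →ₗ[ℝ]
        EuclideanSpace ℝ (Fin m))).starProjection := htproj x
    have hG : ginv x = (graphMetric (fderiv ℝ f x))⁻¹ := hginv x
    beta_reduce
    rw [hι', trace_comp_fderiv_verticalField_toLp _ _ (hφ.differentiable one_ne_zero x)
      (hgraph x), hP, apply_fst_starProjection_graphSubspace_toLp_single, hG]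
    simp only [Finset.sum_mul]
    exact Finset.sum_congr rfl fun i _ => Finset.sum_congr rfl fun j _ => by ring
  case rhs =>
    beta_reduce
    rw [hι', verticalField_toLp _ (hgraph x), real_inner_smul_left]
    simp only [WithLp.prod_inner_apply, WithLp.ofLp_fst, inner_zero_left, WithLp.ofLp_snd,
      EuclideanSpace.inner_single_left, Real.ringHom_apply, one_mul, zero_add, WithLp.equiv_apply]
    ring

/-- If `f : Ω → ℝ^m` is `C¹` with `‖∇f‖_∞ ≤ L` on a bounded open set `Ω ⊆ ℝ^k`, and the
unit-density varifold `V = |graph f|` has generalized mean curvature `h ∈ L²(‖V‖)`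
(i.e. the first variation identity `δV(X) = -∫ X·h d‖V‖` holds, written in graph
coordinates via the area formula), then `f` is a weak solution of the prescribed mean
curvature system `∑ ∂_i(√g gⁱʲ ∂_j f^a) = √g h^a(· + f(·))`. -/
theorem stmt18 (k m : ℕ) (L : ℝ)
    (Ω : Set (EuclideanSpace ℝ (Fin k))) (hΩ : IsOpen Ω)
    (hΩbdd : Bornology.IsBounded Ω)
    (f : EuclideanSpace ℝ (Fin k) → EuclideanSpace ℝ (Fin m))
    (hf : ContDiff ℝ 1 f) (hfL : ∀ x ∈ Ω, ‖fderiv ℝ f x‖ ≤ L)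
    (ι : EuclideanSpace ℝ (Fin k) →
      WithLp 2 (EuclideanSpace ℝ (Fin k) × EuclideanSpace ℝ (Fin m)))
    (hι : ∀ x, ι x = (WithLp.equiv 2
      (EuclideanSpace ℝ (Fin k) × EuclideanSpace ℝ (Fin m))).symm (x, f x))
    (sg : EuclideanSpace ℝ (Fin k) → ℝ)
    (hsg : ∀ x, sg x = Real.sqrt (Matrix.det (Matrix.of fun i j =>
      (if i = j then (1 : ℝ) else 0)
        + ∑ a, fderiv ℝ f x (EuclideanSpace.single i 1) a
            * fderiv ℝ f x (EuclideanSpace.single j 1) a)))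
    (ginv : EuclideanSpace ℝ (Fin k) → Matrix (Fin k) (Fin k) ℝ)
    (hginv : ∀ x, ginv x = (Matrix.of fun i j =>
      (if i = j then (1 : ℝ) else 0)
        + ∑ a, fderiv ℝ f x (EuclideanSpace.single i 1) a
            * fderiv ℝ f x (EuclideanSpace.single j 1) a)⁻¹)
    -- the orthogonal projection onto the tangent plane of the graph at `ι x`
    (tproj : EuclideanSpace ℝ (Fin k) →
      (WithLp 2 (EuclideanSpace ℝ (Fin k) × EuclideanSpace ℝ (Fin m)) →L[ℝ]
        WithLp 2 (EuclideanSpace ℝ (Fin k) × EuclideanSpace ℝ (Fin m))))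
    (htproj : ∀ x, tproj x =
      (LinearMap.range ((WithLp.linearEquiv 2 ℝ
          (EuclideanSpace ℝ (Fin k) × EuclideanSpace ℝ (Fin m))).symm.toLinearMap ∘ₗ
        LinearMap.prod LinearMap.id
          ((fderiv ℝ f x : EuclideanSpace ℝ (Fin k) →L[ℝ] EuclideanSpace ℝ (Fin m))
            : EuclideanSpace ℝ (Fin k) →ₗ[ℝ] EuclideanSpace ℝ (Fin m)))).subtypeL
      ∘L Submodule.orthogonalProjectionOnto (LinearMap.range ((WithLp.linearEquiv 2 ℝ
          (EuclideanSpace ℝ (Fin k) × EuclideanSpace ℝ (Fin m))).symm.toLinearMap ∘ₗ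
        LinearMap.prod LinearMap.id
          ((fderiv ℝ f x : EuclideanSpace ℝ (Fin k) →L[ℝ] EuclideanSpace ℝ (Fin m))
            : EuclideanSpace ℝ (Fin k) →ₗ[ℝ] EuclideanSpace ℝ (Fin m)))))
    -- the generalized mean curvature, square integrable with respect to `‖V‖`
    (h : WithLp 2 (EuclideanSpace ℝ (Fin k) × EuclideanSpace ℝ (Fin m)) →
      WithLp 2 (EuclideanSpace ℝ (Fin k) × EuclideanSpace ℝ (Fin m)))
    (hL2 : IntegrableOn (fun x => ‖h (ι x)‖ ^ 2 * sg x) Ω volume)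
    -- the first variation identity `δV(X) = -∫ X·h d‖V‖`, in graph coordinates
    (hfv : ∀ X : WithLp 2 (EuclideanSpace ℝ (Fin k) × EuclideanSpace ℝ (Fin m)) →
        WithLp 2 (EuclideanSpace ℝ (Fin k) × EuclideanSpace ℝ (Fin m)),
      ContDiff ℝ 1 X → HasCompactSupport X →
      tsupport X ⊆ {z | (WithLp.equiv 2
        (EuclideanSpace ℝ (Fin k) × EuclideanSpace ℝ (Fin m)) z).1 ∈ Ω} →
      ∫ x in Ω, (LinearMap.trace ℝ _)
          (((tproj x) ∘L (fderiv ℝ X (ι x)))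
            : WithLp 2 (EuclideanSpace ℝ (Fin k) × EuclideanSpace ℝ (Fin m)) →ₗ[ℝ]
              WithLp 2 (EuclideanSpace ℝ (Fin k) × EuclideanSpace ℝ (Fin m))) * sg x
        = -∫ x in Ω, ⟪X (ι x), h (ι x)⟫ * sg x) :
    -- conclusion: weak form of the prescribed mean curvature system
    ∀ φ : EuclideanSpace ℝ (Fin k) → ℝ, ContDiff ℝ 1 φ → HasCompactSupport φ →
      tsupport φ ⊆ Ω → ∀ b : Fin m,
      ∑ i, ∑ j, ∫ x in Ω, sg x * ginv x i j
          * fderiv ℝ f x (EuclideanSpace.single j 1) b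
          * fderiv ℝ φ x (EuclideanSpace.single i 1)
        = -∫ x in Ω, sg x * ((WithLp.equiv 2
            (EuclideanSpace ℝ (Fin k) × EuclideanSpace ℝ (Fin m)) (h (ι x))).2 b)
          * φ x :=
  stmt18_general k m L Ω f hf ι hι sg hsg ginv hginv tproj htproj h hfv
end
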